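/- arXiv:1912.11246 — 2 statements merged into one kernel-verified Lean document; each statement's English description precedes it below -/
import Mathlib

section
/- Let G be a (square, prism, pyramid, theta, even wheel)-free graph, C a proper separator of G with full components L and R, and c_1, c_2 non-adjacent vertices of C. Then any shortest (C, c_1, c_2)-hole H is clean with respect to C, i.e., every vertex that is major with respect to H belongs to C. -/
open SimpleGraph

variable {V : Type*}

/-- The arc of the cycle `ZMod n` going from `i` to `j` in increasing direction. -/
def arc {n : ℕ} (i j : ZMod n) : Set (ZMod n) := {k | (k - i).val ≤ (j - i).val}

/-- `f` is a hole (induced cycle of length `n ≥ 4`) in `G`. -/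
def IsHoleEmb (G : SimpleGraph V) (n : ℕ) (f : ZMod n → V) : Prop :=
  4 ≤ n ∧ Function.Injective f ∧
    ∀ i j : ZMod n, G.Adj (f i) (f j) ↔ (j = i + 1 ∨ i = j + 1)

/-- Neighbors of `u` on the hole `f`. -/
def NbrsOn (G : SimpleGraph V) {n : ℕ} (f : ZMod n → V) (u : V) : Set V :=
  {w | w ∈ Set.range f ∧ G.Adj u w}

/-- `u` is major w.r.t. the hole `f`: its neighbors on the hole are not contained in a
3-vertex subpath of the hole. -/
def MajorWrt (G : SimpleGraph V) {n : ℕ} (f : ZMod n → V) (u : V) : Prop :=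
  u ∉ Set.range f ∧ ¬ ∃ i : ZMod n, NbrsOn G f u ⊆ {f (i - 1), f i, f (i + 1)}

/-- `u` is a clone of `f i` w.r.t. the hole `f`. -/
def CloneWrt (G : SimpleGraph V) {n : ℕ} (f : ZMod n → V) (u : V) (i : ZMod n) : Prop :=
  u ∉ Set.range f ∧ NbrsOn G f u = {f (i - 1), f i, f (i + 1)}

/-- `u` and `v` are nested w.r.t. the hole `f`. -/
def NestedWrt (G : SimpleGraph V) {n : ℕ} (f : ZMod n → V) (u v : V) : Prop :=
  ∃ i j : ZMod n, i ≠ j ∧ NbrsOn G f u ⊆ f '' arc i j ∧ NbrsOn G f v ⊆ f '' arc j i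

/-- The arc from `f i` to `f j` is a `u`-sector of the hole `f`. -/
def IsSector (G : SimpleGraph V) {n : ℕ} (f : ZMod n → V) (u : V) (i j : ZMod n) : Prop :=
  i ≠ j ∧ G.Adj u (f i) ∧ G.Adj u (f j) ∧
    ∀ k ∈ arc i j, k ≠ i → k ≠ j → ¬ G.Adj u (f k)

/-- `g` is a chordless (induced) path of length `m` in `G`. -/
def IsCPath (G : SimpleGraph V) (m : ℕ) (g : Fin (m + 1) → V) : Prop :=
  Function.Injective g ∧
    ∀ i j : Fin (m + 1), G.Adj (g i) (g j) ↔ (i.val + 1 = j.val ∨ j.val + 1 = i.val)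

def HasSquare (G : SimpleGraph V) : Prop := ∃ f : ZMod 4 → V, IsHoleEmb G 4 f

def HasEvenHole (G : SimpleGraph V) : Prop :=
  ∃ (n : ℕ) (f : ZMod n → V), IsHoleEmb G n f ∧ Even n

def HasEvenWheel (G : SimpleGraph V) : Prop :=
  ∃ (n : ℕ) (f : ZMod n → V) (v : V), IsHoleEmb G n f ∧ v ∉ Set.range f ∧
    3 ≤ (NbrsOn G f v).ncard ∧ Even (NbrsOn G f v).ncard

/-- A theta configuration: three internally disjoint chordless paths of length `≥ 2`
from `f₁ 0` to `f₁ (last)`, with no edges between the paths except at the two ends. -/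
def ThetaConfig (G : SimpleGraph V) (n₁ n₂ n₃ : ℕ) (f₁ : Fin (n₁ + 1) → V)
    (f₂ : Fin (n₂ + 1) → V) (f₃ : Fin (n₃ + 1) → V) : Prop :=
  2 ≤ n₁ ∧ 2 ≤ n₂ ∧ 2 ≤ n₃ ∧
  IsCPath G n₁ f₁ ∧ IsCPath G n₂ f₂ ∧ IsCPath G n₃ f₃ ∧
  f₂ 0 = f₁ 0 ∧ f₃ 0 = f₁ 0 ∧
  f₂ (Fin.last n₂) = f₁ (Fin.last n₁) ∧ f₃ (Fin.last n₃) = f₁ (Fin.last n₁) ∧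
  ¬ G.Adj (f₁ 0) (f₁ (Fin.last n₁)) ∧
  (∀ i j, i ≠ 0 → i ≠ Fin.last n₁ → j ≠ 0 → j ≠ Fin.last n₂ →
    f₁ i ≠ f₂ j ∧ ¬ G.Adj (f₁ i) (f₂ j)) ∧
  (∀ i j, i ≠ 0 → i ≠ Fin.last n₁ → j ≠ 0 → j ≠ Fin.last n₃ →
    f₁ i ≠ f₃ j ∧ ¬ G.Adj (f₁ i) (f₃ j)) ∧
  (∀ i j, i ≠ 0 → i ≠ Fin.last n₂ → j ≠ 0 → j ≠ Fin.last n₃ →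
    f₂ i ≠ f₃ j ∧ ¬ G.Adj (f₂ i) (f₃ j))

def HasTheta (G : SimpleGraph V) : Prop :=
  ∃ (n₁ n₂ n₃ : ℕ) (f₁ : Fin (n₁ + 1) → V) (f₂ : Fin (n₂ + 1) → V) (f₃ : Fin (n₃ + 1) → V),
    ThetaConfig G n₁ n₂ n₃ f₁ f₂ f₃

/-- A prism configuration: three pairwise disjoint chordless paths of length `≥ 1`
joining the triangle `f₁ 0, f₂ 0, f₃ 0` to the triangle `f₁ last, f₂ last, f₃ last`,
with no other edges between the paths. -/
def PrismConfig (G : SimpleGraph V) (n₁ n₂ n₃ : ℕ) (f₁ : Fin (n₁ + 1) → V)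
    (f₂ : Fin (n₂ + 1) → V) (f₃ : Fin (n₃ + 1) → V) : Prop :=
  1 ≤ n₁ ∧ 1 ≤ n₂ ∧ 1 ≤ n₃ ∧
  IsCPath G n₁ f₁ ∧ IsCPath G n₂ f₂ ∧ IsCPath G n₃ f₃ ∧
  (∀ i j, f₁ i ≠ f₂ j) ∧ (∀ i j, f₁ i ≠ f₃ j) ∧ (∀ i j, f₂ i ≠ f₃ j) ∧
  (∀ i j, G.Adj (f₁ i) (f₂ j) ↔ (i = 0 ∧ j = 0) ∨ (i = Fin.last n₁ ∧ j = Fin.last n₂)) ∧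
  (∀ i j, G.Adj (f₁ i) (f₃ j) ↔ (i = 0 ∧ j = 0) ∨ (i = Fin.last n₁ ∧ j = Fin.last n₃)) ∧
  (∀ i j, G.Adj (f₂ i) (f₃ j) ↔ (i = 0 ∧ j = 0) ∨ (i = Fin.last n₂ ∧ j = Fin.last n₃))

def HasPrism (G : SimpleGraph V) : Prop :=
  ∃ (n₁ n₂ n₃ : ℕ) (f₁ : Fin (n₁ + 1) → V) (f₂ : Fin (n₂ + 1) → V) (f₃ : Fin (n₃ + 1) → V),
    PrismConfig G n₁ n₂ n₃ f₁ f₂ f₃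

/-- A pyramid configuration: three chordless paths of length `≥ 1` (two of length `≥ 2`)
from a common apex `f₁ 0` to the triangle `f₁ last, f₂ last, f₃ last`, vertex-disjoint
except at the apex, with no edges between the paths except those of the triangle and
those at the apex. -/
def PyramidConfig (G : SimpleGraph V) (n₁ n₂ n₃ : ℕ) (f₁ : Fin (n₁ + 1) → V)
    (f₂ : Fin (n₂ + 1) → V) (f₃ : Fin (n₃ + 1) → V) : Prop :=
  1 ≤ n₁ ∧ 1 ≤ n₂ ∧ 1 ≤ n₃ ∧
  ((2 ≤ n₁ ∧ 2 ≤ n₂) ∨ (2 ≤ n₁ ∧ 2 ≤ n₃) ∨ (2 ≤ n₂ ∧ 2 ≤ n₃)) ∧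
  IsCPath G n₁ f₁ ∧ IsCPath G n₂ f₂ ∧ IsCPath G n₃ f₃ ∧
  f₂ 0 = f₁ 0 ∧ f₃ 0 = f₁ 0 ∧
  (∀ i j, ¬(i = 0 ∧ j = 0) → f₁ i ≠ f₂ j) ∧
  (∀ i j, ¬(i = 0 ∧ j = 0) → f₁ i ≠ f₃ j) ∧
  (∀ i j, ¬(i = 0 ∧ j = 0) → f₂ i ≠ f₃ j) ∧
  (∀ i j, i ≠ 0 → j ≠ 0 → (G.Adj (f₁ i) (f₂ j) ↔ (i = Fin.last n₁ ∧ j = Fin.last n₂))) ∧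
  (∀ i j, i ≠ 0 → j ≠ 0 → (G.Adj (f₁ i) (f₃ j) ↔ (i = Fin.last n₁ ∧ j = Fin.last n₃))) ∧
  (∀ i j, i ≠ 0 → j ≠ 0 → (G.Adj (f₂ i) (f₃ j) ↔ (i = Fin.last n₂ ∧ j = Fin.last n₃)))

def HasPyramid (G : SimpleGraph V) : Prop :=
  ∃ (n₁ n₂ n₃ : ℕ) (f₁ : Fin (n₁ + 1) → V) (f₂ : Fin (n₂ + 1) → V) (f₃ : Fin (n₃ + 1) → V),
    PyramidConfig G n₁ n₂ n₃ f₁ f₂ f₃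

/-- The class 𝒞 of (square, prism, pyramid, theta, even wheel)-free graphs. -/
def ClassC (G : SimpleGraph V) : Prop :=
  ¬ HasSquare G ∧ ¬ HasPrism G ∧ ¬ HasPyramid G ∧ ¬ HasTheta G ∧ ¬ HasEvenWheel G

/-- `C` separates `a` from `b`: `a, b ∉ C` and every walk from `a` to `b` meets `C`. -/
def SepSet (G : SimpleGraph V) (C : Set V) (a b : V) : Prop :=
  a ∉ C ∧ b ∉ C ∧ ∀ p : G.Walk a b, ∃ v ∈ p.support, v ∈ C

/-- `C` is a minimal separator of `G`. -/
def IsMinSep (G : SimpleGraph V) (C : Set V) : Prop :=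
  ∃ a b, SepSet G C a b ∧ ∀ C' ⊆ C, SepSet G C' a b → C' = C

/-- The set of vertices outside `S` with a neighbor in `S`. -/
def nbd (G : SimpleGraph V) (S : Set V) : Set V := {v | v ∉ S ∧ ∃ u ∈ S, G.Adj u v}

def ConnectedIn (G : SimpleGraph V) (D : Set V) : Prop :=
  ∀ x ∈ D, ∀ y ∈ D, ∃ p : G.Walk x y, ∀ v ∈ p.support, v ∈ D

/-- `D` is a connected component of `G - C`. -/
def IsCompAvoiding (G : SimpleGraph V) (C D : Set V) : Prop :=
  D.Nonempty ∧ (∀ v ∈ D, v ∉ C) ∧ ConnectedIn G D ∧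
    ∀ u ∈ D, ∀ v, v ∉ C → G.Adj u v → v ∈ D

/-- `D` is a full component of `G - C`: every vertex of `C` has a neighbor in `D`. -/
def IsFullComp (G : SimpleGraph V) (C D : Set V) : Prop :=
  IsCompAvoiding G C D ∧ ∀ c ∈ C, ∃ d ∈ D, G.Adj c d

/-- `G` contains a `k`-semi-induced matching. -/
def HasSemiInducedMatching (G : SimpleGraph V) (k : ℕ) : Prop :=
  ∃ x y : Fin k → V, Function.Injective x ∧ Function.Injective y ∧
    (∀ i j, x i ≠ y j) ∧ ∀ i j, (G.Adj (x i) (y j) ↔ i = j)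

/-- `f a` together with all its clones w.r.t. the hole `f`. -/
def CloneSet (G : SimpleGraph V) {n : ℕ} (f : ZMod n → V) (a : ZMod n) : Set V :=
  insert (f a) {u | CloneWrt G f u a}

/-- `f` is a `(C, c₁, c₂)`-hole, where `f p = c₁`, `f q = c₂`, the interior of one arc
lies in `L` and the interior of the other arc lies in `R`. -/
def IsCHoleAt (G : SimpleGraph V) (C L R : Set V) (c₁ c₂ : V) (n : ℕ)
    (f : ZMod n → V) (p q : ZMod n) : Prop :=
  IsHoleEmb G n f ∧ p ≠ q ∧ f p = c₁ ∧ f q = c₂ ∧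
  Set.range f ∩ C = {c₁, c₂} ∧
  (∀ k ∈ arc p q, k ≠ p → k ≠ q → f k ∈ L) ∧
  (∀ k ∈ arc q p, k ≠ p → k ≠ q → f k ∈ R)

/-- `C` is a proper (minimal, non-clique) separator with full components `L` and `R`. -/
def ProperSepWith (G : SimpleGraph V) (C L R : Set V) : Prop :=
  ¬ G.IsClique C ∧ L ≠ R ∧ IsFullComp G C L ∧ IsFullComp G C R


/-!
Let `u ∉ C` be major w.r.t. a shortest `(C, c₁, c₂)`-hole `H`. If `u ∈ L`, then `u` has no
neighbour in `R`, so its neighbours on `H` lie on the `L`-side path from `c₁` to `c₂`. If `x` and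
`y` are the first and last of them along that path, they are at distance at least 3 there because
`u` is major, and replacing the subpath from `x` to `y` by `x u y` gives a shorter
`(C, c₁, c₂)`-hole. The case `u ∈ R` is the same with `L`, `R` and `c₁`, `c₂` exchanged. Otherwise
`u` has no neighbour in `L ∪ R`, so being major it is adjacent to `c₁` and `c₂` and to nothing
else on `H`, and the two arcs of `H` together with `c₁ u c₂` form a theta.
-/

/- Holes are read off in `ℕ`: position `k < n` of the hole `f` started at `p` is `f (p + k)`. This
turns the cyclic index arithmetic of `ZMod n` into linear arithmetic. -/
def CycAdj (n i j : ℕ) : Prop :=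
  i + 1 = j ∨ j + 1 = i ∨ (i = 0 ∧ j + 1 = n) ∨ (j = 0 ∧ i + 1 = n)

lemma ZMod.natCast_eq_add_one_iff {n i j : ℕ} (hi : i < n) (hj : j < n) :
    (j : ZMod n) = i + 1 ↔ j = i + 1 ∨ (j = 0 ∧ i + 1 = n) := by
  rw [← Nat.cast_succ, ZMod.natCast_eq_natCast_iff', Nat.mod_eq_of_lt hj]
  rcases (Nat.succ_le_of_lt hi).lt_or_eq with h | h
  · rw [Nat.mod_eq_of_lt h]; omega
  · rw [h, Nat.mod_self]; omega

lemma ZMod.natCast_adj_iff_cycAdj {n i j : ℕ} (hi : i < n) (hj : j < n) :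
    ((j : ZMod n) = i + 1 ∨ (i : ZMod n) = j + 1) ↔ CycAdj n i j := by
  rw [ZMod.natCast_eq_add_one_iff hi hj, ZMod.natCast_eq_add_one_iff hj hi, CycAdj]
  omega

lemma ZMod.val_sub_of_lt {n : ℕ} [NeZero n] {a b : ZMod n} (h : a.val < b.val) :
    (a - b).val = a.val + n - b.val := by
  have hba : (b - a).val = b.val - a.val := ZMod.val_sub h.le
  rw [← neg_sub, ZMod.neg_val, if_neg fun e => by rw [e, ZMod.val_zero] at hba; omega, hba]
  have := b.val_lt
  omega

section NatHole

variable {G : SimpleGraph V}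

structure IsNatHole (G : SimpleGraph V) (n : ℕ) (h : ℕ → V) : Prop where
  four_le : 4 ≤ n
  injOn : Set.InjOn h (Set.Iio n)
  adj_iff : ∀ i < n, ∀ j < n, G.Adj (h i) (h j) ↔ CycAdj n i j

lemma IsHoleEmb.isNatHole {n : ℕ} {f : ZMod n → V} (hf : IsHoleEmb G n f) (p : ZMod n) :
    IsNatHole G n (fun k : ℕ => f (p + k)) where
  four_le := hf.1
  injOn i hi j hj hij := by
    have := add_left_cancel (hf.2.1 hij)
    rwa [ZMod.natCast_eq_natCast_iff', Nat.mod_eq_of_lt hi, Nat.mod_eq_of_lt hj] at this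
  adj_iff i hi j hj := by
    rw [hf.2.2, ← ZMod.natCast_adj_iff_cycAdj hi hj, add_assoc, add_assoc, add_right_inj,
      add_right_inj]

lemma IsNatHole.isHoleEmb {n : ℕ} {h : ℕ → V} (hh : IsNatHole G n h) :
    IsHoleEmb G n (fun i : ZMod n => h i.val) := by
  have : NeZero n := ⟨by have := hh.four_le; omega⟩
  refine ⟨hh.four_le, fun i j hij => ZMod.val_injective n (hh.injOn i.val_lt j.val_lt hij),
    fun i j => ?_⟩
  rw [hh.adj_iff _ i.val_lt _ j.val_lt, ← ZMod.natCast_adj_iff_cycAdj i.val_lt j.val_lt,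
    ZMod.natCast_zmod_val, ZMod.natCast_zmod_val]

-- The cycle `h 0, …, h s, u, h t, …, h (n - 1)`.
def shortcut (h : ℕ → V) (u : V) (s t k : ℕ) : V :=
  if k ≤ s then h k else if k = s + 1 then u else h (k + t - (s + 2))

lemma IsNatHole.shortcut {n s t : ℕ} {h : ℕ → V} {u : V} (hh : IsNatHole G n h)
    (hu : u ∉ h '' Set.Iio n) (hst : s + 2 ≤ t) (htn : t + 2 ≤ n + s) (ht : t < n)
    (hus : G.Adj u (h s)) (hut : G.Adj u (h t))
    (hnbr : ∀ k < n, G.Adj u (h k) → s ≤ k ∧ k ≤ t) :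
    IsNatHole G (n + s + 2 - t) (shortcut h u s t) := by
  have hu' : ∀ k < n, h k ≠ u := fun k hk hku => hu ⟨k, hk, hku⟩
  have hux : ∀ k < n, k ≤ s ∨ t ≤ k → (G.Adj u (h k) ↔ k = s ∨ k = t) := fun k hk hout =>
    ⟨fun hadj => by have := hnbr k hk hadj; omega, by rintro (rfl | rfl) <;> assumption⟩
  have h4 := hh.four_le
  refine ⟨by omega, fun i hi j hj hij => ?_, fun i hi j hj => ?_⟩
  · simp only [Set.mem_Iio] at hi hj
    simp only [_root_.shortcut] at hij
    split_ifs at hij <;>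
      first
      | omega
      | exact absurd hij (hu' _ (by omega))
      | exact absurd hij.symm (hu' _ (by omega))
      | have := hh.injOn (by simp only [Set.mem_Iio]; omega) (by simp only [Set.mem_Iio]; omega) hij
        omega
  · simp only [_root_.shortcut]
    split_ifs <;>
      first
      | rw [hh.adj_iff _ (by omega) _ (by omega), CycAdj, CycAdj]; omega
      | rw [hux _ (by omega) (by omega), CycAdj]; omega
      | rw [G.adj_comm, hux _ (by omega) (by omega), CycAdj]; omega
      | simp only [SimpleGraph.irrefl, false_iff, CycAdj]; omega

-- `MajorWrt`, phrased as: no closed neighbourhood of a hole vertex contains all neighbours of `u`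
-- on the hole.
def IsNatMajor (G : SimpleGraph V) (n : ℕ) (h : ℕ → V) (u : V) : Prop :=
  u ∉ h '' Set.Iio n ∧ ∀ i < n, ∃ k < n, G.Adj u (h k) ∧ k ≠ i ∧ ¬ G.Adj (h i) (h k)

lemma IsNatMajor.add_three_le {n s t : ℕ} {h : ℕ → V} {u : V} (hh : IsNatHole G n h)
    (hu : IsNatMajor G n h u) (hs : s + 1 < n)
    (hnbr : ∀ k < n, G.Adj u (h k) → s ≤ k ∧ k ≤ t) : s + 3 ≤ t := by
  obtain ⟨k, hk, hadj, hks, hnk⟩ := hu.2 (s + 1) hs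
  have := hnbr k hk hadj
  by_contra
  exact hnk ((hh.adj_iff _ hs _ hk).2 (by rw [CycAdj]; omega))

-- A `(C, c₁, c₂)`-hole read from `c₁ = h 0`, with `c₂ = h d`.
structure IsNatCHole (G : SimpleGraph V) (L R : Set V) (n d : ℕ) (h : ℕ → V) : Prop where
  isNatHole : IsNatHole G n h
  pos : 0 < d
  lt : d < n
  mem_left : ∀ k, 0 < k → k < d → h k ∈ L
  mem_right : ∀ k, d < k → k < n → h k ∈ R

lemma IsNatCHole.exists_shorter {L R : Set V} {n d : ℕ} {h : ℕ → V} {u : V}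
    (hH : IsNatCHole G L R n d h) (hnadj : ¬ G.Adj (h 0) (h d)) (hu : IsNatMajor G n h u)
    (huL : u ∈ L) (hnbr : ∀ k < n, G.Adj u (h k) → k ≤ d) :
    ∃ m d' g, IsNatCHole G L R m d' g ∧ g 0 = h 0 ∧ g d' = h d ∧ m < n := by
  classical
  have hh := hH.isNatHole
  have hd := hH.lt
  have hdn : d + 2 ≤ n := by
    rw [hh.adj_iff _ (by omega) _ hd, CycAdj] at hnadj
    omega
  have hex : ∃ k, k < n ∧ G.Adj u (h k) := by
    obtain ⟨k, hk, hadj, -⟩ := hu.2 0 (by omega)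
    exact ⟨k, hk, hadj⟩
  set s := Nat.find hex
  set t := Nat.findGreatest (fun k => G.Adj u (h k)) d
  obtain ⟨hsn, hs⟩ : s < n ∧ G.Adj u (h s) := Nat.find_spec hex
  have hsd := hnbr s hsn hs
  have ht : G.Adj u (h t) := Nat.findGreatest_spec (P := fun k => G.Adj u (h k)) hsd hs
  have htd : t ≤ d := Nat.findGreatest_le d
  have hbounds : ∀ k < n, G.Adj u (h k) → s ≤ k ∧ k ≤ t := fun k hk hadj =>
    ⟨Nat.find_min' hex ⟨hk, hadj⟩, Nat.le_findGreatest (hnbr k hk hadj) hadj⟩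
  have hgap := hu.add_three_le hh (by omega) hbounds
  refine ⟨n + s + 2 - t, d + s + 2 - t, shortcut h u s t,
    ⟨hh.shortcut hu.1 (by omega) (by omega) (by omega) hs ht hbounds, by omega, by omega,
      fun k hk0 hkd => ?_, fun k hdk hkn => ?_⟩, by simp [shortcut], ?_, by omega⟩
  · unfold shortcut
    split_ifs
    · exact hH.mem_left k hk0 (by omega)
    · exact huL
    · exact hH.mem_left _ (by omega) (by omega)
  · rw [shortcut, if_neg (by omega), if_neg (by omega)]
    exact hH.mem_right _ (by omega) (by omega)
  · rw [shortcut, if_neg (by omega), if_neg (by omega)]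
    congr 1
    omega

lemma IsNatHole.isCPath_comp {n l : ℕ} {h : ℕ → V} (hh : IsNatHole G n h)
    (φ : Fin (l + 1) → ℕ) (hφn : ∀ i, φ i < n) (hφ : Function.Injective φ)
    (hφadj : ∀ i j, CycAdj n (φ i) (φ j) ↔ i.val + 1 = j.val ∨ j.val + 1 = i.val) :
    IsCPath G l (fun i => h (φ i)) :=
  ⟨fun i j hij => hφ (hh.injOn (hφn i) (hφn j) hij),
    fun i j => (hh.adj_iff _ (hφn i) _ (hφn j)).trans (hφadj i j)⟩

lemma isCPath_two {a u b : V} (hab : a ≠ b) (hau : G.Adj a u) (hub : G.Adj u b)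
    (hnab : ¬ G.Adj a b) : IsCPath G 2 ![a, u, b] := by
  refine ⟨fun i j hij => ?_, fun i j => ?_⟩ <;> fin_cases i <;> fin_cases j <;>
    simp_all [hau.ne, hub.ne, hau.ne.symm, hub.ne.symm, hau.symm, hub.symm, G.adj_comm b a]

lemma IsNatHole.hasTheta {n d : ℕ} {h : ℕ → V} {u : V} (hh : IsNatHole G n h)
    (hu : u ∉ h '' Set.Iio n) (hnbr : ∀ k < n, G.Adj u (h k) ↔ k = 0 ∨ k = d)
    (hd : 2 ≤ d) (hdn : d + 2 ≤ n) : HasTheta G := by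
  have hoff : ∀ k < n, k ≠ 0 → k ≠ d → h k ≠ u ∧ ¬ G.Adj (h k) u := fun k hk h0 hd =>
    ⟨fun hku => hu ⟨k, hk, hku⟩, fun hadj => by have := (hnbr k hk).1 hadj.symm; omega⟩
  have hpath₁ := hh.isCPath_comp (l := d) (fun i => i.val) (fun i => by omega)
    Fin.val_injective (fun i j => by rw [CycAdj]; omega)
  have hpath₂ := hh.isCPath_comp (l := n - d) (fun j => if j.val = 0 then 0 else n - j.val)
    (fun j => by split_ifs <;> omega)
    (fun i j hij => Fin.ext <| by
      have := i.isLt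
      have := j.isLt
      simp only at hij
      split_ifs at hij <;> omega)
    (fun i j => by have := i.isLt; have := j.isLt; rw [CycAdj]; split <;> split <;> omega)
  have hpath₃ := isCPath_two (G := G)
    (fun h0d => (by omega : 0 ≠ d)
      (hh.injOn (by simp only [Set.mem_Iio]; omega) (by simp only [Set.mem_Iio]; omega) h0d))
    ((hnbr 0 (by omega)).2 (Or.inl rfl)).symm ((hnbr d (by omega)).2 (Or.inr rfl))
    (by rw [hh.adj_iff _ (by omega) _ (by omega), CycAdj]; omega)
  refine ⟨d, n - d, 2, _, _, _, hd, by omega, le_rfl, hpath₁, hpath₂, hpath₃, by simp, rfl,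
    by simp only [Fin.val_last]; rw [if_neg (by omega)]; congr 1; omega, rfl, ?_, ?_, ?_, ?_⟩
  · simp only [Fin.val_zero, Fin.val_last]
    rw [hh.adj_iff _ (by omega) _ (by omega), CycAdj]
    omega
  · intro i j hi0 hid hj0 hjl
    rw [Ne, Fin.ext_iff, Fin.val_zero] at hi0 hj0
    rw [Ne, Fin.ext_iff, Fin.val_last] at hid hjl
    have := i.isLt
    have := j.isLt
    rw [if_neg hj0]
    refine ⟨fun e => ?_, ?_⟩
    · have := hh.injOn (by simp only [Set.mem_Iio]; omega) (by simp only [Set.mem_Iio]; omega) e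
      omega
    · rw [hh.adj_iff _ (by omega) _ (by omega), CycAdj]
      omega
  · intro i j hi0 hid hj0 hjl
    rw [Ne, Fin.ext_iff, Fin.val_zero] at hi0
    rw [Ne, Fin.ext_iff, Fin.val_last] at hid
    fin_cases j
    · exact absurd rfl hj0
    · exact hoff _ (by omega) hi0 hid
    · exact absurd rfl hjl
  · intro i j hi0 hil hj0 hjl
    rw [Ne, Fin.ext_iff, Fin.val_zero] at hi0
    rw [Ne, Fin.ext_iff, Fin.val_last] at hil
    have := i.isLt
    rw [if_neg hi0]
    fin_cases j
    · exact absurd rfl hj0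
    · exact hoff _ (by omega) (by omega) (by omega)
    · exact absurd rfl hjl

lemma IsNatHole.hasTheta_of_major {n d : ℕ} {h : ℕ → V} {u : V} (hh : IsNatHole G n h)
    (hu : IsNatMajor G n h u) (hnbr : ∀ k < n, G.Adj u (h k) → k = 0 ∨ k = d)
    (hnadj : ¬ G.Adj (h 0) (h d)) (hd0 : 0 < d) (hdn : d < n) : HasTheta G := by
  have h4 := hh.four_le
  have hadj₀ : G.Adj u (h 0) := by
    obtain ⟨k, hk, hadj, hkd, -⟩ := hu.2 d hdn
    obtain rfl : k = 0 := by have := hnbr k hk hadj; omega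
    exact hadj
  have hadj_d : G.Adj u (h d) := by
    obtain ⟨k, hk, hadj, hk0, -⟩ := hu.2 0 (by omega)
    obtain rfl : k = d := by have := hnbr k hk hadj; omega
    exact hadj
  rw [hh.adj_iff _ (by omega) _ hdn, CycAdj] at hnadj
  refine hh.hasTheta hu.1 (fun k hk => ⟨hnbr k hk, ?_⟩) (by omega) (by omega)
  rintro (rfl | rfl) <;> assumption

end NatHole

section ZModHole

variable {G : SimpleGraph V}

lemma IsCompAvoiding.mem_of_walk {C D : Set V} (hD : IsCompAvoiding G C D) {x y : V}
    (w : G.Walk x y) (hx : x ∈ D) (hw : ∀ v ∈ w.support, v ∉ C) : y ∈ D := by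
  induction w with
  | nil => exact hx
  | cons hadj w ih =>
    simp only [SimpleGraph.Walk.support_cons, List.mem_cons, forall_eq_or_imp] at hw
    exact ih (hD.2.2.2 _ hx _ (hw.2 _ w.start_mem_support) hadj) hw.2

lemma IsCompAvoiding.subset_of_mem {C A B : Set V} (hA : IsCompAvoiding G C A)
    (hB : IsCompAvoiding G C B) {x : V} (hxA : x ∈ A) (hxB : x ∈ B) : A ⊆ B := fun y hy => by
  obtain ⟨w, hw⟩ := hA.2.2.1 x hxA y hy
  exact hB.mem_of_walk w hxB fun v hv => hA.2.1 v (hw v hv)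

lemma IsCompAvoiding.not_adj {C A B : Set V} (hA : IsCompAvoiding G C A)
    (hB : IsCompAvoiding G C B) (hAB : A ≠ B) {x y : V} (hx : x ∈ A) (hy : y ∈ B) :
    ¬ G.Adj x y := fun hxy => by
  have hyA := hA.2.2.2 x hx y (hB.2.1 y hy) hxy
  exact hAB ((hA.subset_of_mem hB hyA hy).antisymm (hB.subset_of_mem hA hy hyA))

lemma MajorWrt.isNatMajor {n : ℕ} {f : ZMod n → V} {u : V} (hf : IsHoleEmb G n f)
    (hu : MajorWrt G f u) (p : ZMod n) : IsNatMajor G n (fun k : ℕ => f (p + k)) u := by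
  have : NeZero n := ⟨by have := hf.1; omega⟩
  refine ⟨fun ⟨k, _, hk⟩ => hu.1 ⟨_, hk⟩, fun i _ => ?_⟩
  obtain ⟨w, ⟨⟨j, rfl⟩, hadj⟩, hw⟩ := Set.not_subset.1 fun hsub => hu.2 ⟨p + i, hsub⟩
  have hj : p + (((j - p).val : ℕ) : ZMod n) = j := by
    rw [ZMod.natCast_zmod_val, add_sub_cancel]
  refine ⟨(j - p).val, ZMod.val_lt _, by simpa only [hj], fun hji => hw ?_, fun hadj' => hw ?_⟩
  · rw [← hj, hji]
    simp
  · simp only [hj] at hadj'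
    rw [hf.2.2] at hadj'
    rcases hadj' with rfl | hj'
    · simp
    · simp [eq_sub_of_add_eq hj'.symm]

lemma IsCHoleAt.swap {C L R : Set V} {c₁ c₂ : V} {n : ℕ} {f : ZMod n → V} {p q : ZMod n}
    (hH : IsCHoleAt G C L R c₁ c₂ n f p q) : IsCHoleAt G C R L c₂ c₁ n f q p := by
  obtain ⟨hf, hpq, hp, hq, hC, hL, hR⟩ := hH
  exact ⟨hf, hpq.symm, hq, hp, by rw [hC, Set.pair_comm], fun k hk hkq hkp => hR k hk hkp hkq,
    fun k hk hkq hkp => hL k hk hkp hkq⟩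

lemma IsCHoleAt.mem_C {C L R : Set V} {c₁ c₂ : V} {n : ℕ} {f : ZMod n → V} {p q : ZMod n}
    (hH : IsCHoleAt G C L R c₁ c₂ n f p q) : c₁ ∈ C ∧ c₂ ∈ C := by
  have h₁ : c₁ ∈ Set.range f ∩ C := hH.2.2.2.2.1 ▸ Set.mem_insert c₁ {c₂}
  have h₂ : c₂ ∈ Set.range f ∩ C := hH.2.2.2.2.1 ▸ Set.mem_insert_of_mem c₁ rfl
  exact ⟨h₁.2, h₂.2⟩

lemma IsCHoleAt.isNatCHole {C L R : Set V} {c₁ c₂ : V} {n : ℕ} {f : ZMod n → V}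
    {p q : ZMod n} (hH : IsCHoleAt G C L R c₁ c₂ n f p q) :
    IsNatCHole G L R n (q - p).val (fun k : ℕ => f (p + k)) := by
  obtain ⟨hf, hpq, -, -, -, hL, hR⟩ := hH
  have : NeZero n := ⟨by have := hf.1; omega⟩
  have hqp : q = p + (((q - p).val : ℕ) : ZMod n) := by
    rw [ZMod.natCast_zmod_val, add_sub_cancel]
  have hd0 : q - p ≠ 0 := sub_ne_zero.2 hpq.symm
  have hne_q : ∀ k < n, k ≠ (q - p).val → p + (k : ZMod n) ≠ q := fun k hk hkd e => hkd <| by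
    rw [hqp, add_right_inj, ZMod.natCast_eq_natCast_iff', Nat.mod_eq_of_lt hk,
      Nat.mod_eq_of_lt (ZMod.val_lt _)] at e
    exact e
  have hne_p : ∀ k < n, k ≠ 0 → p + (k : ZMod n) ≠ p := fun k hk hk0 e => hk0 <| by
    rwa [add_eq_left, ← Nat.cast_zero, ZMod.natCast_eq_natCast_iff', Nat.mod_eq_of_lt hk,
      Nat.zero_mod] at e
  refine ⟨hf.isNatHole p, (ZMod.val_pos).2 hd0, ZMod.val_lt _, fun k hk0 hkd => ?_,
    fun k hdk hkn => ?_⟩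
  · have hkn : k < n := hkd.trans (ZMod.val_lt _)
    refine hL _ ?_ (hne_p k hkn hk0.ne') (hne_q k hkn hkd.ne)
    change ((p + k) - p).val ≤ (q - p).val
    rw [add_sub_cancel_left, ZMod.val_cast_of_lt hkn]
    exact hkd.le
  · refine hR _ ?_ (hne_p k hkn (by omega)) (hne_q k hkn hdk.ne')
    change ((p + k) - q).val ≤ (p - q).val
    rw [show p + (k : ZMod n) - q = (k : ZMod n) - (q - p) by ring,
      show p - q = 0 - (q - p) by ring, ZMod.val_sub (by rw [ZMod.val_cast_of_lt hkn]; omega),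
      ZMod.val_sub_of_lt (a := 0) (b := q - p) (by rw [ZMod.val_zero]; exact ZMod.val_pos.2 hd0),
      ZMod.val_cast_of_lt hkn, ZMod.val_zero]
    omega

lemma IsNatCHole.isCHoleAt {C L R : Set V} {m d : ℕ} {h : ℕ → V}
    (hH : IsNatCHole G L R m d h) (h₀ : h 0 ∈ C) (h_d : h d ∈ C) (hL : ∀ v ∈ L, v ∉ C)
    (hR : ∀ v ∈ R, v ∉ C) :
    IsCHoleAt G C L R (h 0) (h d) m (fun i : ZMod m => h i.val) 0 d := by
  have : NeZero m := ⟨by have := hH.isNatHole.four_le; omega⟩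
  have hdv : (d : ZMod m).val = d := ZMod.val_cast_of_lt hH.lt
  have hval_ne : ∀ k : ZMod m, k ≠ d → k.val ≠ d := fun k hkd e =>
    hkd (by rw [← ZMod.natCast_zmod_val k, e])
  refine ⟨hH.isNatHole.isHoleEmb, fun e => ?_, by simp, by simp [hdv], ?_,
    fun k hk hk0 hkd => ?_, fun k hk hk0 hkd => ?_⟩
  · have := congrArg ZMod.val e
    rw [ZMod.val_zero, hdv] at this
    exact hH.pos.ne this
  · ext w
    refine ⟨fun ⟨⟨i, hi⟩, hwC⟩ => ?_, ?_⟩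
    · subst hi
      have := i.val_lt
      rcases Nat.lt_trichotomy i.val d with hid | hid | hid
      · rcases Nat.eq_zero_or_pos i.val with hi0 | hi0
        · exact Or.inl (congrArg h hi0)
        · exact absurd hwC (hL _ (hH.mem_left _ hi0 hid))
      · exact Or.inr (congrArg h hid)
      · exact absurd hwC (hR _ (hH.mem_right _ hid i.val_lt))
    · rintro (rfl | rfl)
      · exact ⟨⟨0, by simp⟩, h₀⟩
      · exact ⟨⟨d, by simp [hdv]⟩, h_d⟩
  · simp only [arc, Set.mem_ofPred_eq, sub_zero, hdv] at hk
    exact hH.mem_left _ (Nat.pos_of_ne_zero (mt (ZMod.val_eq_zero k).1 hk0))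
      (lt_of_le_of_ne hk (hval_ne k hkd))
  · change (k - d).val ≤ (0 - d : ZMod m).val at hk
    have hk0' : k.val ≠ 0 := mt (ZMod.val_eq_zero k).1 hk0
    refine hH.mem_right _ ?_ k.val_lt
    by_contra! hkd'
    have hlt : k.val < d := lt_of_le_of_ne hkd' (hval_ne k hkd)
    rw [ZMod.val_sub_of_lt (by rwa [hdv]), ZMod.val_sub_of_lt (by rw [hdv, ZMod.val_zero]; omega),
      hdv, ZMod.val_zero] at hk
    have := hH.lt
    omega

lemma IsCHoleAt.natCast_endpoints {C L R : Set V} {c₁ c₂ : V} {n : ℕ} {f : ZMod n → V}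
    {p q : ZMod n} (hH : IsCHoleAt G C L R c₁ c₂ n f p q) :
    f (p + ((0 : ℕ) : ZMod n)) = c₁ ∧ f (p + (((q - p).val : ℕ) : ZMod n)) = c₂ := by
  have : NeZero n := ⟨by have := hH.1.1; omega⟩
  rw [Nat.cast_zero, add_zero, ZMod.natCast_zmod_val, add_sub_cancel]
  exact ⟨hH.2.2.1, hH.2.2.2.1⟩

lemma IsCHoleAt.exists_shorter_of_major {C L R : Set V} {c₁ c₂ u : V} {n : ℕ}
    {f : ZMod n → V} {p q : ZMod n} (hH : IsCHoleAt G C L R c₁ c₂ n f p q)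
    (hnadj : ¬ G.Adj c₁ c₂) (hL : IsCompAvoiding G C L) (hR : IsCompAvoiding G C R)
    (hLR : L ≠ R) (hu : MajorWrt G f u) (huL : u ∈ L) :
    ∃ m g p' q', IsCHoleAt G C L R c₁ c₂ m g p' q' ∧ m < n := by
  have hN := hH.isNatCHole
  obtain ⟨h₀, h_d⟩ := hH.natCast_endpoints
  obtain ⟨m, d', g, hg, hg₀, hg_d, hm⟩ := hN.exists_shorter (by rwa [h₀, h_d])
    (hu.isNatMajor hH.1 p) huL fun k hk hadj => by
      by_contra! hdk
      exact hL.not_adj hR hLR huL (hN.mem_right k hdk hk) hadj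
  have hg' := hg.isCHoleAt (C := C) (by rw [hg₀, h₀]; exact hH.mem_C.1)
    (by rw [hg_d, h_d]; exact hH.mem_C.2) hL.2.1 hR.2.1
  rw [hg₀, hg_d, h₀, h_d] at hg'
  exact ⟨m, _, 0, d', hg', hm⟩

lemma IsCHoleAt.hasTheta_of_major {C L R : Set V} {c₁ c₂ u : V} {n : ℕ} {f : ZMod n → V}
    {p q : ZMod n} (hH : IsCHoleAt G C L R c₁ c₂ n f p q) (hnadj : ¬ G.Adj c₁ c₂)
    (hL : IsCompAvoiding G C L) (hR : IsCompAvoiding G C R) (hu : MajorWrt G f u)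
    (huC : u ∉ C) (huL : u ∉ L) (huR : u ∉ R) : HasTheta G := by
  have hN := hH.isNatCHole
  obtain ⟨h₀, h_d⟩ := hH.natCast_endpoints
  refine hN.isNatHole.hasTheta_of_major (hu.isNatMajor hH.1 p) (fun k hk hadj => ?_)
    (by rwa [h₀, h_d]) hN.pos hN.lt
  by_contra! hk'
  rcases lt_or_gt_of_ne hk'.2 with hkd | hkd
  · exact huL (hL.2.2.2 _ (hN.mem_left k (Nat.pos_of_ne_zero hk'.1) hkd) u huC hadj.symm)
  · exact huR (hR.2.2.2 _ (hN.mem_right k hkd hk) u huC hadj.symm)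

end ZModHole

theorem shortest_CHole_clean_general {V : Type*} (G : SimpleGraph V) (hG : ClassC G)
    (C L R : Set V) (hsep : ProperSepWith G C L R)
    (c₁ c₂ : V) (hnadj : ¬ G.Adj c₁ c₂)
    (n : ℕ) (f : ZMod n → V) (p q : ZMod n)
    (hH : IsCHoleAt G C L R c₁ c₂ n f p q)
    (hshort : ∀ (m : ℕ) (g : ZMod m → V) (p' q' : ZMod m),
      IsCHoleAt G C L R c₁ c₂ m g p' q' → n ≤ m) :
    ∀ u : V, MajorWrt G f u → u ∈ C := by
  intro u hu
  by_contra huC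
  obtain ⟨-, hLR, ⟨hL, -⟩, ⟨hR, -⟩⟩ := hsep
  by_cases huL : u ∈ L
  · obtain ⟨m, g, p', q', hg, hm⟩ := hH.exists_shorter_of_major hnadj hL hR hLR hu huL
    exact (hshort m g p' q' hg).not_gt hm
  by_cases huR : u ∈ R
  · obtain ⟨m, g, p', q', hg, hm⟩ :=
      hH.swap.exists_shorter_of_major (fun h => hnadj h.symm) hR hL hLR.symm hu huR
    exact (hshort m g q' p' hg.swap).not_gt hm
  exact hG.2.2.2.1 (hH.hasTheta_of_major hnadj hL hR hu huC huL huR)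

/-- In a graph of class 𝒞, any shortest `(C, c₁, c₂)`-hole is clean w.r.t. the proper
separator `C`: every major vertex w.r.t. it belongs to `C`. -/
theorem shortest_CHole_clean {V : Type*} (G : SimpleGraph V) (hG : ClassC G)
    (C L R : Set V) (hsep : ProperSepWith G C L R)
    (c₁ c₂ : V) (hc₁ : c₁ ∈ C) (hc₂ : c₂ ∈ C) (hne : c₁ ≠ c₂) (hnadj : ¬ G.Adj c₁ c₂)
    (n : ℕ) (f : ZMod n → V) (p q : ZMod n)
    (hH : IsCHoleAt G C L R c₁ c₂ n f p q)
    (hshort : ∀ (m : ℕ) (g : ZMod m → V) (p' q' : ZMod m),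
      IsCHoleAt G C L R c₁ c₂ m g p' q' → n ≤ m) :
    ∀ u : V, MajorWrt G f u → u ∈ C :=
  shortest_CHole_clean_general G hG C L R hsep c₁ c₂ hnadj n f p q hH hshort
end

section
/- Let G be a (square, prism, pyramid, theta, even wheel)-free graph, C a proper separator of G, H a clean (C, c_1, c_2)-hole, and for i ∈ {1,2} let L_i be the set consisting of l_i and all clones of l_i w.r.t. H, and R_i the set consisting of r_i and all clones of r_i w.r.t. H. Then L_i and R_i are disjoint cliques and L_i is anticomplete to R_i. -/
/-!
Two clones of the same hole vertex `f a` are adjacent, since otherwise they would span a square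
with `f (a - 1)` and `f (a + 1)`. A vertex is a clone of at most one hole vertex, so the clone
sets of distinct hole vertices are disjoint. Finally, if a clone `x` of `f (c + 1)` were adjacent
to a clone `y` of `f (c - 1)`, then replacing `f (c - 1)` by `y` would give a hole on which `x`
has the four neighbours `y, f c, f (c + 1), f (c + 2)`: an even wheel.
-/

open SimpleGraph

variable {V : Type*}

section Clones

variable {G : SimpleGraph V} {n : ℕ} {f : ZMod n → V}

theorem ZMod.natCast_ne_zero_of_pos_of_lt {n k : ℕ} (hk : 0 < k) (hkn : k < n) :
    (k : ZMod n) ≠ 0 := by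
  rw [Ne, ZMod.natCast_eq_zero_iff]
  exact Nat.not_dvd_of_pos_of_lt hk hkn

theorem hasSquare_of_adj {u a v b : V} (huv : u ≠ v) (hab : a ≠ b) (hua : G.Adj u a)
    (hav : G.Adj a v) (hvb : G.Adj v b) (hbu : G.Adj b u) (hnuv : ¬ G.Adj u v)
    (hnab : ¬ G.Adj a b) : HasSquare G := by
  refine ⟨![u, a, v, b], le_rfl, ?_, ?_⟩
  · change Function.Injective (![u, a, v, b] : Fin 4 → V)
    intro i j h
    fin_cases i <;> fin_cases j <;> simp_all [G.ne_of_adj, (G.ne_of_adj _).symm]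
  · change ∀ i j : Fin 4, G.Adj (![u, a, v, b] i) (![u, a, v, b] j) ↔ (j = i + 1 ∨ i = j + 1)
    intro i j
    fin_cases i <;> fin_cases j <;> simp_all [G.adj_comm]

theorem IsHoleEmb.injective (hH : IsHoleEmb G n f) : Function.Injective f := hH.2.1

theorem IsHoleEmb.adj_iff (hH : IsHoleEmb G n f) (i j : ZMod n) :
    G.Adj (f i) (f j) ↔ j = i + 1 ∨ i = j + 1 := hH.2.2 i j

theorem IsHoleEmb.one_two_three_ne_zero (hH : IsHoleEmb G n f) :
    (1 : ZMod n) ≠ 0 ∧ (2 : ZMod n) ≠ 0 ∧ (3 : ZMod n) ≠ 0 := by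
  have h4 := hH.1
  refine ⟨?_, ?_, ?_⟩
  · exact_mod_cast ZMod.natCast_ne_zero_of_pos_of_lt (k := 1) (by norm_num) (by omega)
  · exact_mod_cast ZMod.natCast_ne_zero_of_pos_of_lt (k := 2) (by norm_num) (by omega)
  · exact_mod_cast ZMod.natCast_ne_zero_of_pos_of_lt (k := 3) (by norm_num) (by omega)

theorem IsHoleEmb.sub_one_ne_add_one (hH : IsHoleEmb G n f) (a : ZMod n) :
    f (a - 1) ≠ f (a + 1) := fun h =>
  hH.one_two_three_ne_zero.2.1 (by linear_combination hH.injective h.symm)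

theorem IsHoleEmb.not_adj_sub_one_add_one (hH : IsHoleEmb G n f) (a : ZMod n) :
    ¬ G.Adj (f (a - 1)) (f (a + 1)) := by
  obtain ⟨h1, -, h3⟩ := hH.one_two_three_ne_zero
  rw [hH.adj_iff]
  rintro (h | h)
  · exact h1 (by linear_combination h)
  · exact h3 (by linear_combination -h)

theorem CloneWrt.adj_iff (hf : Function.Injective f) {x : V} {a : ZMod n}
    (hx : CloneWrt G f x a) (i : ZMod n) : G.Adj x (f i) ↔ i = a - 1 ∨ i = a ∨ i = a + 1 := by
  simpa [NbrsOn, hf.eq_iff] using Set.ext_iff.mp hx.2 (f i)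

theorem CloneWrt.adj_iff_adj (hH : IsHoleEmb G n f) {x : V} {a i : ZMod n}
    (hx : CloneWrt G f x a) (hi : i ≠ a) : G.Adj x (f i) ↔ G.Adj (f a) (f i) := by
  rw [hx.adj_iff hH.injective, hH.adj_iff, eq_sub_iff_add_eq, eq_comm (a := a)]
  tauto

theorem CloneWrt.eq_of_cloneWrt (hH : IsHoleEmb G n f) {x : V} {a b : ZMod n}
    (ha : CloneWrt G f x a) (hb : CloneWrt G f x b) : a = b := by
  obtain ⟨h1, h2, h3⟩ := hH.one_two_three_ne_zero
  have hf := hH.injective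
  rcases (hb.adj_iff hf a).1 ((ha.adj_iff hf a).2 (by simp)) with rfl | rfl | rfl
  · exfalso
    rcases (hb.adj_iff hf _).1 ((ha.adj_iff hf (b - 1 - 1)).2 (Or.inl rfl)) with h | h | h
    · exact h1 (by linear_combination -h)
    · exact h2 (by linear_combination -h)
    · exact h3 (by linear_combination -h)
  · rfl
  · exfalso
    rcases (hb.adj_iff hf _).1 ((ha.adj_iff hf (b + 1 + 1)).2 (Or.inr (Or.inr rfl))) with h | h | h
    · exact h3 (by linear_combination h)
    · exact h2 (by linear_combination h)
    · exact h1 (by linear_combination h)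

theorem IsHoleEmb.update_of_cloneWrt (hH : IsHoleEmb G n f) {y : V} {a : ZMod n}
    (hy : CloneWrt G f y a) : IsHoleEmb G n (Function.update f a y) := by
  refine ⟨hH.1, fun i j h => ?_, fun i j => ?_⟩
  · simp only [Function.update_apply] at h
    split_ifs at h with hi hj hj
    · rw [hi, hj]
    · exact absurd ⟨j, h.symm⟩ hy.1
    · exact absurd ⟨i, h⟩ hy.1
    · exact hH.injective h
  · rw [← hH.adj_iff i j]
    simp only [Function.update_apply]
    split_ifs with hi hj hj
    · simp [hi, hj]
    · rw [hi, hy.adj_iff_adj hH hj]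
    · rw [hj, G.adj_comm, hy.adj_iff_adj hH hi, G.adj_comm]
    · rfl

theorem IsHoleEmb.cloneSet_isClique (hsq : ¬ HasSquare G) (hH : IsHoleEmb G n f) (a : ZMod n) :
    G.IsClique (CloneSet G f a) := by
  have hf := hH.injective
  rintro u (rfl | hu) v (rfl | hv) huv
  · exact absurd rfl huv
  · exact ((hv.adj_iff hf a).2 (by simp)).symm
  · exact (hu.adj_iff hf a).2 (by simp)
  · by_contra hne
    exact hsq (hasSquare_of_adj huv (hH.sub_one_ne_add_one a) ((hu.adj_iff hf _).2 (by simp))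
      ((hv.adj_iff hf _).2 (by simp)).symm ((hv.adj_iff hf _).2 (by simp))
      ((hu.adj_iff hf _).2 (by simp)).symm hne (hH.not_adj_sub_one_add_one a))

theorem IsHoleEmb.disjoint_cloneSet (hH : IsHoleEmb G n f) {a b : ZMod n} (hab : a ≠ b) :
    Disjoint (CloneSet G f a) (CloneSet G f b) := by
  rw [Set.disjoint_left]
  rintro u (rfl | hu) (hb | hb)
  · exact hab (hH.injective hb)
  · exact hb.1 ⟨a, rfl⟩
  · exact hu.1 ⟨b, hb.symm⟩
  · exact hab (hu.eq_of_cloneWrt hH hb)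

theorem CloneWrt.nbrsOn_update_eq (hH : IsHoleEmb G n f) {c : ZMod n} {x y : V}
    (hx : CloneWrt G f x (c + 1)) (hxy : G.Adj x y) :
    NbrsOn G (Function.update f (c - 1) y) x = {y, f c, f (c + 1), f (c + 2)} := by
  obtain ⟨h1, h2, h3⟩ := hH.one_two_three_ne_zero
  have hxf : ∀ i, G.Adj x (f i) ↔ i = c ∨ i = c + 1 ∨ i = c + 2 := by
    intro i
    rw [hx.adj_iff hH.injective, add_sub_cancel_right, add_assoc, one_add_one_eq_two]
  have hne : c ≠ c - 1 ∧ c + 1 ≠ c - 1 ∧ c + 2 ≠ c - 1 := by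
    refine ⟨fun h => h1 ?_, fun h => h2 ?_, fun h => h3 ?_⟩ <;> linear_combination h
  ext w
  constructor
  · rintro ⟨⟨i, rfl⟩, hw⟩
    by_cases hic : i = c - 1
    · simp [hic]
    · rw [Function.update_of_ne hic] at hw ⊢
      rcases (hxf i).1 hw with rfl | rfl | rfl <;> simp
  · rintro (rfl | rfl | rfl | rfl)
    · exact ⟨⟨c - 1, Function.update_self _ _ _⟩, hxy⟩
    · exact ⟨⟨c, Function.update_of_ne hne.1 _ _⟩, (hxf c).2 (Or.inl rfl)⟩
    · exact ⟨⟨c + 1, Function.update_of_ne hne.2.1 _ _⟩, (hxf _).2 (Or.inr (Or.inl rfl))⟩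
    · exact ⟨⟨c + 2, Function.update_of_ne hne.2.2 _ _⟩, (hxf _).2 (Or.inr (Or.inr rfl))⟩

theorem IsHoleEmb.not_adj_of_cloneWrt (hew : ¬ HasEvenWheel G) (hH : IsHoleEmb G n f)
    {c : ZMod n} {x y : V} (hx : CloneWrt G f x (c + 1)) (hy : CloneWrt G f y (c - 1)) :
    ¬ G.Adj x y := by
  intro hxy
  obtain ⟨h1, h2, -⟩ := hH.one_two_three_ne_zero
  have hf := hH.injective
  have hxg : x ∉ Set.range (Function.update f (c - 1) y) := by
    rintro ⟨i, hi⟩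
    by_cases hic : i = c - 1
    · rw [hic, Function.update_self] at hi
      exact G.ne_of_adj hxy hi.symm
    · exact hx.1 ⟨i, (Function.update_of_ne hic y f).symm.trans hi⟩
  have hcard : (NbrsOn G (Function.update f (c - 1) y) x).ncard = 4 :=
    Set.ncard_eq_four.2 ⟨y, f c, f (c + 1), f (c + 2), fun h => hy.1 ⟨c, h.symm⟩,
      fun h => hy.1 ⟨_, h.symm⟩, fun h => hy.1 ⟨_, h.symm⟩,
      hf.ne fun h => h1 (by linear_combination -h), hf.ne fun h => h2 (by linear_combination -h),
      hf.ne fun h => h1 (by linear_combination -h), hx.nbrsOn_update_eq hH hxy⟩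
  exact hew ⟨n, _, x, hH.update_of_cloneWrt hy, hxg, by omega, by rw [hcard]; decide⟩

theorem IsHoleEmb.not_adj_of_mem_cloneSet (hew : ¬ HasEvenWheel G) (hH : IsHoleEmb G n f)
    (c : ZMod n) : ∀ x ∈ CloneSet G f (c + 1), ∀ y ∈ CloneSet G f (c - 1), ¬ G.Adj x y := by
  obtain ⟨h1, h2, h3⟩ := hH.one_two_three_ne_zero
  have hf := hH.injective
  rintro x (rfl | hx) y (rfl | hy)
  · exact fun h => hH.not_adj_sub_one_add_one c h.symm
  · rw [G.adj_comm, hy.adj_iff hf]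
    rintro (h | h | h)
    · exact h3 (by linear_combination h)
    · exact h2 (by linear_combination h)
    · exact h1 (by linear_combination h)
  · rw [hx.adj_iff hf]
    rintro (h | h | h)
    · exact h1 (by linear_combination -h)
    · exact h2 (by linear_combination -h)
    · exact h3 (by linear_combination -h)
  · exact hH.not_adj_of_cloneWrt hew hx hy

end Clones

/-- Here `l₁ = f (p + 1)`, `r₁ = f (p - 1)`, `l₂ = f (q - 1)` and `r₂ = f (q + 1)`. -/
theorem clone_sets_disjoint_cliques_general {V : Type*} (G : SimpleGraph V) (hG : ClassC G)
    (C L R : Set V)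
    (c₁ c₂ : V)
    (n : ℕ) (f : ZMod n → V) (p q : ZMod n)
    (hH : IsCHoleAt G C L R c₁ c₂ n f p q) :
    (Disjoint (CloneSet G f (p + 1)) (CloneSet G f (p - 1)) ∧
      G.IsClique (CloneSet G f (p + 1)) ∧ G.IsClique (CloneSet G f (p - 1)) ∧
      ∀ x ∈ CloneSet G f (p + 1), ∀ y ∈ CloneSet G f (p - 1), ¬ G.Adj x y) ∧
    (Disjoint (CloneSet G f (q - 1)) (CloneSet G f (q + 1)) ∧
      G.IsClique (CloneSet G f (q - 1)) ∧ G.IsClique (CloneSet G f (q + 1)) ∧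
      ∀ x ∈ CloneSet G f (q - 1), ∀ y ∈ CloneSet G f (q + 1), ¬ G.Adj x y) := by
  have hhole : IsHoleEmb G n f := hH.1
  have hclique := hhole.cloneSet_isClique hG.1
  have hanti := hhole.not_adj_of_mem_cloneSet hG.2.2.2.2
  have hdisj (c : ZMod n) : Disjoint (CloneSet G f (c + 1)) (CloneSet G f (c - 1)) :=
    hhole.disjoint_cloneSet fun h => hhole.sub_one_ne_add_one c (congrArg f h.symm)
  exact ⟨⟨hdisj p, hclique _, hclique _, hanti p⟩,
    ⟨(hdisj q).symm, hclique _, hclique _, fun x hx y hy hxy => hanti q y hy x hx hxy.symm⟩⟩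

/-- In a graph of class 𝒞 with proper separator `C` and clean `(C, c₁, c₂)`-hole `f`
(where `f p = c₁`, `f q = c₂`, `l₁ = f (p+1)`, `r₁ = f (p-1)`, `l₂ = f (q-1)`,
`r₂ = f (q+1)`): for `i ∈ {1, 2}`, the sets `L_i` and `R_i` (of `l_i`, `r_i` and their
clones) are disjoint cliques and `L_i` is anticomplete to `R_i`. -/
theorem clone_sets_disjoint_cliques {V : Type*} (G : SimpleGraph V) (hG : ClassC G)
    (C L R : Set V) (hsep : ProperSepWith G C L R)
    (c₁ c₂ : V) (hc₁ : c₁ ∈ C) (hc₂ : c₂ ∈ C) (hne : c₁ ≠ c₂) (hnadj : ¬ G.Adj c₁ c₂)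
    (n : ℕ) (f : ZMod n → V) (p q : ZMod n)
    (hH : IsCHoleAt G C L R c₁ c₂ n f p q)
    (hclean : ∀ u : V, MajorWrt G f u → u ∈ C) :
    (Disjoint (CloneSet G f (p + 1)) (CloneSet G f (p - 1)) ∧
      G.IsClique (CloneSet G f (p + 1)) ∧ G.IsClique (CloneSet G f (p - 1)) ∧
      ∀ x ∈ CloneSet G f (p + 1), ∀ y ∈ CloneSet G f (p - 1), ¬ G.Adj x y) ∧
    (Disjoint (CloneSet G f (q - 1)) (CloneSet G f (q + 1)) ∧
      G.IsClique (CloneSet G f (q - 1)) ∧ G.IsClique (CloneSet G f (q + 1)) ∧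
      ∀ x ∈ CloneSet G f (q - 1), ∀ y ∈ CloneSet G f (q + 1), ¬ G.Adj x y) :=
  clone_sets_disjoint_cliques_general G hG C L R c₁ c₂ n f p q hH
end
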